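/- Greedy optimality transfer for safety filtering: let ψ be a trajectory score such that for every trajectory x_{0:∞}, if V*_ψ(x_t) ≥ 0 for all t ≥ 0 then ρ_{[ψ]}(x_{0:∞}) ≥ 0 (no indefinite deferral). Let Q*_ψ be such that Q*_ψ(x_t, a_t) ≥ 0 implies V*_ψ(x_{t+1}) ≥ 0, where x_{t+1} = f(x_t, a_t). If V*_ψ(x₀) ≥ 0 and at every step the applied action a_t satisfies Q*_ψ(x_t, a_t) ≥ 0, then the resulting closed-loop trajectory satisfies ρ_{[ψ]}(x_{0:∞}) ≥ 0. -/
import Mathlib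


variable {X A : Type*}

/-- Suffix (time shift) of an infinite trajectory. -/
def shift (x : ℕ → X) (t : ℕ) : ℕ → X := fun n => x (n + t)

/-- Trajectory of the deterministic system `x_{k+1} = f(x_k, a_k)` from `x0`. -/
def traj (f : X → A → X) (x0 : X) (a : ℕ → A) : ℕ → X
  | 0 => x0
  | n + 1 => f (traj f x0 a n) (a n)

/-- Optimal value of a trajectory score from a state. -/
noncomputable def Vstate (f : X → A → X) (ψ : (ℕ → X) → EReal) (x0 : X) : EReal :=
  ⨆ a : ℕ → A, ψ (traj f x0 a)

/-- Glue a history prefix `x_{0:k-1}` with a continuation trajectory `y` started at time `k`. -/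
def splice (x : ℕ → X) (k : ℕ) (y : ℕ → X) : ℕ → X := fun n => if n < k then x n else y (n - k)

/-- History value function: optimal robustness over all dynamically feasible continuations
of the history `x_{0:k}` (the continuation starts from `x k`). -/
noncomputable def Vhist (f : X → A → X) (ψ : (ℕ → X) → EReal) (x : ℕ → X) (k : ℕ) : EReal :=
  ⨆ a : ℕ → A, ψ (splice x k (traj f (x k) a))

/-- History Q-function: apply action `a` at time `k`, then maximize over continuations. -/
noncomputable def Qhist (f : X → A → X) (ψ : (ℕ → X) → EReal) (x : ℕ → X) (k : ℕ) (a : A) :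
    EReal :=
  ⨆ c : ℕ → A, ψ (splice x (k + 1) (traj f (f (x k) a) c))

/-- Trajectory generated by a (non-Markovian) policy `π` from the history `x_{0:k}`:
it agrees with `x` up to time `k` and thereafter applies `π n` to the history `x_{0:n}`. -/
def genFrom (f : X → A → X) (π : ℕ → (ℕ → X) → A) (x : ℕ → X) (k : ℕ) : ℕ → X
  | 0 => x 0
  | n + 1 =>
    if n + 1 ≤ k then x (n + 1)
    else f (genFrom f π x k n) (π n (fun m => genFrom f π x k (min m n)))
  termination_by n => n
  decreasing_by all_goals omega

/-- specification-satisfaction guarantee of the safety filter. Suppose `ψ`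
admits no indefinite deferral: along any trajectory, nonnegativity of the optimal value at
every state implies nonnegative robustness. If the one-step consistency
`0 ≤ Q x a → 0 ≤ Vstate f ψ (f x a)` holds, every applied action has nonnegative Q-value,
the trajectory follows the dynamics, and the initial value is nonnegative, then the
closed-loop trajectory satisfies `0 ≤ ψ x`. -/
theorem safety_filter_satisfaction [Nonempty A]
    (f : X → A → X) (ψ : (ℕ → X) → EReal)
    (hψ : ∀ x : ℕ → X, (∀ t : ℕ, 0 ≤ Vstate f ψ (x t)) → 0 ≤ ψ x)
    (Q : X → A → EReal)
    (hQ : ∀ (x : X) (a : A), 0 ≤ Q x a → 0 ≤ Vstate f ψ (f x a))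
    (x : ℕ → X) (a : ℕ → A)
    (hdyn : ∀ t : ℕ, x (t + 1) = f (x t) (a t))
    (hQa : ∀ t : ℕ, 0 ≤ Q (x t) (a t))
    (hV0 : 0 ≤ Vstate f ψ (x 0)) :
    0 ≤ ψ x := by
  apply hψ
  intro t
  induction t with
  | zero => exact hV0
  | succ n ih => rw [hdyn n]; exact hQ _ _ (hQa n)
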